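/- Let F: ℝ → ℂ be a smooth compactly supported function on (0, ∞), and for u ∈ ℂ define F̈(u) := ∫₀^∞ r·F(r²)·J₀(πr|u|/(4√2)) dr, where J₀ is the Bessel function of the first kind of order 0. Then F̈(0) = (1/2)·∫₀^∞ F(t) dt, and for every A ∈ ℤ≥0 one has F̈(u) ≪_{F,A} (1 + |u|)^{-A}. -/

import Mathlib

noncomputable section

open Complex MeasureTheory

/-- Bessel function of the first kind of order 0,
`J₀(x) = (1/2π) ∫₀^{2π} e^{-i x cos θ} dθ`. -/
def besselJ0 (x : ℝ) : ℂ :=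
  (1 / (2 * Real.pi)) * ∫ θ in (0 : ℝ)..(2 * Real.pi), Complex.exp (-Complex.I * x * Real.cos θ)

/-- The Bessel transform `F̈(u) = ∫₀^∞ r F(r²) J₀(π r |u| / (4√2)) dr`. -/
def Fdd (F : ℝ → ℂ) (u : ℂ) : ℂ :=
  ∫ r in Set.Ioi (0 : ℝ),
    (r : ℂ) * F (r ^ 2) * besselJ0 (Real.pi * r * ‖u‖ / (4 * Real.sqrt 2))

open Set in
lemma besselJ0_zero : besselJ0 0 = 1 := by
  have hpi : (Real.pi : ℂ) ≠ 0 := by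
    simpa using Real.pi_ne_zero
  simp [besselJ0]
  field_simp

lemma sub_int (F : ℝ → ℂ) :
    (∫ r in Set.Ioi (0:ℝ), (r : ℂ) * F (r ^ 2)) = (1 / 2) * ∫ t in Set.Ioi (0:ℝ), F t := by
  rw [← integral_comp_rpow_Ioi F (by norm_num : (2:ℝ) ≠ 0)]
  have : ∀ r ∈ Set.Ioi (0:ℝ),
      (|2| * r ^ ((2:ℝ) - 1)) • F (r ^ (2:ℝ)) = (2:ℂ) * ((r:ℂ) * F (r ^ 2)) := by
    intro r _
    have h1 : r ^ ((2:ℝ) - 1) = r := by norm_num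
    have h2 : r ^ (2:ℝ) = r ^ 2 := by
      rw [show (2:ℝ) = ((2:ℕ):ℝ) by norm_num, Real.rpow_natCast]
    rw [h1, h2, real_smul, (by norm_num : |(2:ℝ)| = 2)]
    push_cast
    ring
  rw [setIntegral_congr_fun measurableSet_Ioi this, integral_const_mul]
  ring

lemma hasCompactSupport_g {E : Type*} [NormedAddCommGroup E] [ProperSpace E]
    {F : ℝ → ℂ} (hsupp : HasCompactSupport F) :
    HasCompactSupport (fun x : E => F (‖x‖ ^ 2)) := by
  obtain ⟨r, hr⟩ := hsupp.isBounded.subset_closedBall 0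
  apply HasCompactSupport.intro (isCompact_closedBall (0 : E) (Real.sqrt r))
  intro x hx
  by_contra h
  have : ‖x‖ ^ 2 ∈ tsupport F := subset_tsupport F h
  have h2 : |‖x‖ ^ 2 - 0| ≤ r := by simpa [Real.dist_eq] using hr this
  apply hx
  simp only [Metric.mem_closedBall, dist_zero_right]
  have h3 : ‖x‖ ^ 2 ≤ r := by
    rw [sub_zero] at h2
    exact (le_abs_self _).trans h2
  calc ‖x‖ = Real.sqrt (‖x‖ ^ 2) := (Real.sqrt_sq (norm_nonneg x)).symm
  _ ≤ Real.sqrt r := Real.sqrt_le_sqrt h3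

def toSchwartz (F : ℝ → ℂ) (hF : ContDiff ℝ (⊤ : ℕ∞) F) (hsupp : HasCompactSupport F) :
    SchwartzMap (EuclideanSpace ℝ (Fin 2)) ℂ where
  toFun x := F (‖x‖ ^ 2)
  smooth' := by exact (hF.comp (contDiff_norm_sq (E := EuclideanSpace ℝ (Fin 2)) ℝ)).of_le (by simp)
  decay' := by
    intro k n
    have hg : ContDiff ℝ (⊤ : ℕ∞) (fun x : EuclideanSpace ℝ (Fin 2) => F (‖x‖ ^ 2)) :=
      hF.comp (contDiff_norm_sq (E := EuclideanSpace ℝ (Fin 2)) ℝ)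
    have hc : Continuous fun x : EuclideanSpace ℝ (Fin 2) =>
        ‖x‖ ^ k * ‖iteratedFDeriv ℝ n (fun x : EuclideanSpace ℝ (Fin 2) => F (‖x‖ ^ 2)) x‖ :=
      ((continuous_norm.pow k).mul
        (hg.continuous_iteratedFDeriv (by exact_mod_cast le_top)).norm)
    have hcs : HasCompactSupport fun x : EuclideanSpace ℝ (Fin 2) =>
        ‖x‖ ^ k * ‖iteratedFDeriv ℝ n (fun x : EuclideanSpace ℝ (Fin 2) => F (‖x‖ ^ 2)) x‖ := by
      have := (HasCompactSupport.iteratedFDeriv (𝕜 := ℝ) (hasCompactSupport_g (E := EuclideanSpace ℝ (Fin 2)) hsupp) n).norm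
      exact this.mul_left
    obtain ⟨C, hC⟩ := hc.bounded_above_of_compact_support hcs
    refine ⟨C, fun x => ?_⟩
    have := hC x
    rw [Real.norm_eq_abs] at this
    exact le_trans (le_abs_self _) this

lemma integral_Ioo_exp (x : ℝ) :
    ∫ θ in Set.Ioo (-Real.pi) Real.pi, Complex.exp (-Complex.I * x * Real.cos θ) =
      2 * Real.pi * besselJ0 x := by
  have h1 : (∫ θ in Set.Ioo (-Real.pi) Real.pi, Complex.exp (-Complex.I * x * Real.cos θ))
      = ∫ θ in (-Real.pi)..Real.pi, Complex.exp (-Complex.I * x * Real.cos θ) := by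
    rw [intervalIntegral.integral_of_le (by linarith [Real.pi_pos]),
      MeasureTheory.integral_Ioc_eq_integral_Ioo]
  have hper : Function.Periodic (fun θ : ℝ => Complex.exp (-Complex.I * x * Real.cos θ))
      (2 * Real.pi) := by
    intro θ; simp [Real.cos_add_two_pi]
  have h2 := hper.intervalIntegral_add_eq (-Real.pi) 0
  simp only [zero_add] at h2
  rw [show -Real.pi + 2 * Real.pi = Real.pi by ring] at h2
  rw [h1, h2, besselJ0]
  have hpi : (2 * Real.pi : ℂ) ≠ 0 := by
    simp [Real.pi_ne_zero]
  rw [← mul_assoc, mul_one_div, div_self (by push_cast at hpi ⊢; exact hpi), one_mul]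

open FourierTransform in
lemma key (F : ℝ → ℂ) (hF : ContDiff ℝ (⊤ : ℕ∞) F) (hsupp : HasCompactSupport F) (s : ℝ) :
    FourierTransform.fourier (fun x : EuclideanSpace ℝ (Fin 2) => F (‖x‖ ^ 2))
        (EuclideanSpace.single 0 s)
      = (2 * Real.pi) *
        ∫ r in Set.Ioi (0:ℝ), (r:ℂ) * F (r ^ 2) * besselJ0 (2 * Real.pi * s * r) := by
  have hFc : Continuous F := hF.continuous
  set h : ℝ × ℝ → ℂ := fun p =>
    Complex.exp ((↑(-2 * Real.pi * (s * p.1)) : ℂ) * Complex.I) * F (p.1 ^ 2 + p.2 ^ 2) with hh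
  -- Step A : Fourier integral equals integral of h over ℝ × ℝ
  have stepA : FourierTransform.fourier (fun x : EuclideanSpace ℝ (Fin 2) => F (‖x‖ ^ 2))
      (EuclideanSpace.single 0 s) = ∫ p : ℝ × ℝ, h p := by
    rw [Real.fourier_eq']
    have hmp : MeasurePreserving
        ((MeasurableEquiv.toLp 2 (Fin 2 → ℝ)).symm.trans MeasurableEquiv.finTwoArrow)
        volume volume :=
      (volume_preserving_finTwoArrow ℝ).comp
        (EuclideanSpace.volume_preserving_symm_measurableEquiv_toLp (Fin 2))
    rw [← hmp.integral_comp (MeasurableEquiv.measurableEmbedding _) h]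
    congr 1
    ext v
    have hinner : (inner ℝ v (EuclideanSpace.single (0 : Fin 2) s) : ℝ) = s * v 0 := by
      rw [EuclideanSpace.inner_single_right]; simp
    have hnorm : ‖v‖ ^ 2 = (v 0) ^ 2 + (v 1) ^ 2 := by
      rw [EuclideanSpace.norm_eq, Real.sq_sqrt (by positivity)]
      simp [Fin.sum_univ_two, sq_abs]
    simp only [hh, MeasurableEquiv.trans_apply, MeasurableEquiv.finTwoArrow_apply,
      MeasurableEquiv.toLp_symm_apply]
    rw [smul_eq_mul, hinner, hnorm]
  rw [stepA]
  -- Step B : polar coordinates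
  rw [← integral_comp_polarCoord_symm h]
  -- Step C : rewrite integrand over the target
  set f₀ : ℝ × ℝ → ℂ := fun p =>
    ((p.1 : ℂ) * F (p.1 ^ 2)) * Complex.exp (-Complex.I * ↑(2 * Real.pi * s * p.1)
      * ↑(Real.cos p.2)) with hf₀
  have stepC : (∫ p in polarCoord.target, p.1 • h (polarCoord.symm p)) = ∫ p in
      Set.Ioi (0:ℝ) ×ˢ Set.Ioo (-Real.pi) Real.pi, f₀ p := by
    rw [polarCoord_target]
    apply setIntegral_congr_fun (measurableSet_Ioi.prod measurableSet_Ioo)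
    rintro ⟨r, θ⟩ ⟨hr, hθ⟩
    simp only [hh, hf₀, polarCoord_symm_apply]
    have harg : (r * Real.cos θ) ^ 2 + (r * Real.sin θ) ^ 2 = r ^ 2 := by
      rw [mul_pow, mul_pow, ← mul_add, Real.cos_sq_add_sin_sq, mul_one]
    rw [harg, real_smul]
    rw [show ((↑(-2 * Real.pi * (s * (r * Real.cos θ))) : ℂ) * Complex.I)
        = -Complex.I * ↑(2 * Real.pi * s * r) * ↑(Real.cos θ) by push_cast; ring]
    ring
  rw [stepC]
  -- Step D : Fubini
  have hg₁c : Continuous (fun r : ℝ => (r : ℂ) * F (r ^ 2)) :=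
    Complex.continuous_ofReal.mul (hFc.comp (continuous_pow 2))
  have hg₁s : HasCompactSupport (fun r : ℝ => (r : ℂ) * F (r ^ 2)) := by
    have h2 : HasCompactSupport (fun r : ℝ => F (r ^ 2)) := by
      have := hasCompactSupport_g (E := ℝ) hsupp
      simpa [Real.norm_eq_abs, sq_abs] using this
    exact h2.mul_left
  have hg₁ : MeasureTheory.Integrable (fun r : ℝ => (r : ℂ) * F (r ^ 2)) :=
    hg₁c.integrable_of_hasCompactSupport hg₁s
  have hint : IntegrableOn f₀ (Set.Ioi (0:ℝ) ×ˢ Set.Ioo (-Real.pi) Real.pi)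
      (volume.prod volume) := by
    rw [IntegrableOn, ← Measure.prod_restrict]
    have hbound : MeasureTheory.Integrable
        (fun p : ℝ × ℝ => ‖(p.1 : ℂ) * F (p.1 ^ 2)‖ * 1)
        ((volume.restrict (Set.Ioi (0:ℝ))).prod
          (volume.restrict (Set.Ioo (-Real.pi) Real.pi))) :=
      MeasureTheory.Integrable.mul_prod (hg₁.norm.restrict)
        ((integrableOn_const measure_Ioo_lt_top.ne))
    apply MeasureTheory.Integrable.mono' hbound
    · apply Continuous.aestronglyMeasurable
      apply hg₁c.comp continuous_fst |>.mul
      apply Complex.continuous_exp.comp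
      continuity
    · filter_upwards with p
      have hexp : ‖Complex.exp (-Complex.I * ↑(2 * Real.pi * s * p.1)
          * ↑(Real.cos p.2))‖ = 1 := by
        simp [Complex.norm_exp]
      rw [hf₀]
      simp only [norm_mul, hexp, mul_one, le_refl]
  rw [Measure.volume_eq_prod, setIntegral_prod f₀ hint]
  -- Step E : inner integral
  have stepE : ∀ r ∈ Set.Ioi (0:ℝ),
      (∫ θ in Set.Ioo (-Real.pi) Real.pi, f₀ (r, θ))
        = (2 * Real.pi : ℂ) * ((r:ℂ) * F (r ^ 2) * besselJ0 (2 * Real.pi * s * r)) := by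
    intro r _
    rw [hf₀]
    simp only
    rw [MeasureTheory.integral_const_mul, integral_Ioo_exp]
    push_cast
    ring
  rw [setIntegral_congr_fun measurableSet_Ioi stepE, MeasureTheory.integral_const_mul]

open Set in
/-- value at `0` and rapid decay of the Bessel transform. -/
theorem bessel_transform (F : ℝ → ℂ) (hF : ContDiff ℝ (⊤ : ℕ∞) F) (hsupp : HasCompactSupport F)
    (hpos : tsupport F ⊆ Set.Ioi 0) :
    (Fdd F 0 = (1 / 2) * ∫ t in Set.Ioi (0 : ℝ), F t) ∧
    ∀ A : ℕ, ∃ K : ℝ, 0 < K ∧ ∀ u : ℂ,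
      ‖Fdd F u‖ ≤ K / (1 + ‖u‖) ^ A := by
  constructor
  · rw [Fdd]
    have h0 : ∀ r ∈ Set.Ioi (0:ℝ), (r:ℂ) * F (r ^ 2) *
        besselJ0 (Real.pi * r * ‖(0:ℂ)‖ / (4 * Real.sqrt 2)) = (r:ℂ) * F (r ^ 2) := by
      intro r _
      simp [besselJ0_zero]
    rw [setIntegral_congr_fun measurableSet_Ioi h0]
    exact sub_int F
  · intro A
    classical
    set S : SchwartzMap (EuclideanSpace ℝ (Fin 2)) ℂ := toSchwartz F hF hsupp with hS
    set T : SchwartzMap (EuclideanSpace ℝ (Fin 2)) ℂ :=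
      SchwartzMap.fourierTransformCLM ℝ S with hT
    set C₀ : ℝ := 2 ^ A * ((Finset.Iic ((A, 0) : ℕ × ℕ)).sup
      (fun m => SchwartzMap.seminorm ℝ m.1 m.2)) T with hC₀
    have hC₀0 : 0 ≤ C₀ := mul_nonneg (by positivity) (apply_nonneg _ _)
    have hsqrt2 : (1:ℝ) ≤ Real.sqrt 2 := by
      rw [show (1:ℝ) = Real.sqrt 1 by simp]
      exact Real.sqrt_le_sqrt (by norm_num)
    set P : ℝ := (8 * Real.sqrt 2) ^ A with hPdef
    have hP1 : (1:ℝ) ≤ 8 * Real.sqrt 2 := by nlinarith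
    have hPpos : 0 < P := by positivity
    refine ⟨P * (C₀ / (2 * Real.pi) + 1), by positivity, fun u => ?_⟩
    set b := ‖u‖ with hbdef
    have hb : 0 ≤ b := norm_nonneg _
    set s : ℝ := b / (8 * Real.sqrt 2) with hsdef
    have hs : 0 ≤ s := by positivity
    set ξ : EuclideanSpace ℝ (Fin 2) := EuclideanSpace.single (0 : Fin 2) s with hξdef
    have hξ : ‖ξ‖ = s := by
      rw [hξdef, EuclideanSpace.norm_single, Real.norm_eq_abs, _root_.abs_of_nonneg hs]
    have hb_eq : b = 8 * Real.sqrt 2 * s := by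
      rw [hsdef]
      field_simp
    have hFdd : Fdd F u = (1 / (2 * Real.pi) : ℂ) *
        FourierTransform.fourier (fun x : EuclideanSpace ℝ (Fin 2) => F (‖x‖ ^ 2)) ξ := by
      rw [key F hF hsupp s, Fdd]
      have harg : ∀ r ∈ Set.Ioi (0:ℝ), (r:ℂ) * F (r ^ 2) *
          besselJ0 (Real.pi * r * ‖u‖ / (4 * Real.sqrt 2)) =
          (r:ℂ) * F (r ^ 2) * besselJ0 (2 * Real.pi * s * r) := by
        intro r _
        congr 2
        rw [hsdef, ← hbdef]
        have h2 : Real.sqrt 2 ≠ 0 := by positivity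
        field_simp
        ring
      rw [setIntegral_congr_fun measurableSet_Ioi harg, ← mul_assoc,
        show (1 / (2 * Real.pi) : ℂ) * (2 * Real.pi) = 1 by
          have : (Real.pi : ℂ) ≠ 0 := by simpa using Real.pi_ne_zero
          field_simp, one_mul]
    have hTξ : FourierTransform.fourier (fun x : EuclideanSpace ℝ (Fin 2) => F (‖x‖ ^ 2)) ξ
        = T ξ := by
      rw [hT, SchwartzMap.fourierTransformCLM_apply]
      rfl
    have hdecay : ‖T ξ‖ * (1 + s) ^ A ≤ C₀ := by
      have h := SchwartzMap.one_add_le_sup_seminorm_apply (𝕜 := ℝ) (m := ((A, 0) : ℕ × ℕ))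
        le_rfl le_rfl T ξ
      rw [norm_iteratedFDeriv_zero, hξ] at h
      rw [mul_comm]
      exact h
    have habs : ‖Fdd F u‖ = 1 / (2 * Real.pi) * ‖T ξ‖ := by
      rw [hFdd, hTξ, norm_mul]
      congr 1
      · rw [norm_div]
        have hpi : |Real.pi| = Real.pi := abs_of_nonneg Real.pi_pos.le
        norm_num [Complex.norm_real, hpi]
    rw [le_div_iff₀ (by positivity : (0:ℝ) < (1 + b) ^ A)]
    have hpow : (1 + b) ^ A ≤ P * (1 + s) ^ A := by
      rw [hPdef, ← mul_pow]
      apply pow_le_pow_left₀ (by positivity)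
      rw [hb_eq]
      nlinarith
    calc ‖Fdd F u‖ * (1 + b) ^ A
        ≤ (1 / (2 * Real.pi) * ‖T ξ‖) * (P * (1 + s) ^ A) := by
          rw [habs]
          gcongr
      _ = P * (1 / (2 * Real.pi)) * (‖T ξ‖ * (1 + s) ^ A) := by ring
      _ ≤ P * (1 / (2 * Real.pi)) * C₀ := by
          gcongr
      _ ≤ P * (C₀ / (2 * Real.pi) + 1) := by
          rw [mul_assoc]
          gcongr
          have : 1 / (2 * Real.pi) * C₀ = C₀ / (2 * Real.pi) := by ring
          linarith [this]
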